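/- arXiv:math/0105159 — 3 statements merged into one kernel-verified Lean document; each statement's English description precedes it below -/
import Mathlib

section
/- For every real ξ ≥ 1, the tail Fresnel integral satisfies the asymptotic bound: |∫_ξ^∞ e^{2πi y²} dy - e^{2πi ξ²} · c₁/ξ| ≤ C/ξ² for some absolute constants c₁ ∈ ℂ and C > 0. -/
/-!
Since `d/dy e^{2πiy²} = 4πi y e^{2πiy²}`, integrating by parts against `(4πi y^{n+1})⁻¹` gives
`∫_ξ^R e^{2πiy²} y^{-n} dy = [e^{2πiy²} / (4πi y^{n+1})]_ξ^R + (n+1)/(4πi) ∫_ξ^R e^{2πiy²} y^{-n-2} dy`.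
For `n = 0` the right side converges as `R → ∞`, with leading term `e^{2πiξ²} · (i/(4π)) / ξ` and
remainder `(4πi)⁻¹ ∫_ξ^∞ e^{2πiy²} y^{-2} dy`. Estimating this remainder trivially only gives
`O(ξ⁻¹)`; one more integration by parts (`n = 2`) exhibits the oscillation and gives `O(ξ⁻³)`.
-/

open MeasureTheory Complex Filter Real

noncomputable def fresnelExp (y : ℝ) : ℂ := cexp (2 * π * I * ((y ^ 2 : ℝ) : ℂ))

lemma four_pi_I_ne_zero : (4 * π * I : ℂ) ≠ 0 := by simp [Real.pi_ne_zero, I_ne_zero]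

lemma norm_four_pi_I : ‖(4 * π * I : ℂ)‖ = 4 * π := by
  simp [abs_of_pos Real.pi_pos]

@[fun_prop]
lemma continuous_fresnelExp : Continuous fresnelExp := by
  unfold fresnelExp; fun_prop

lemma norm_fresnelExp (y : ℝ) : ‖fresnelExp y‖ = 1 := by
  rw [fresnelExp, show 2 * π * I * ((y ^ 2 : ℝ) : ℂ) = ((2 * π * y ^ 2 : ℝ) : ℂ) * I by
    push_cast; ring, norm_exp_ofReal_mul_I]

lemma hasDerivAt_fresnelExp (y : ℝ) :
    HasDerivAt fresnelExp (4 * π * I * y * fresnelExp y) y := by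
  have h := ((hasDerivAt_pow 2 y).ofReal_comp.const_mul (2 * π * I : ℂ)).cexp
  convert h using 1
  · funext t; simp [fresnelExp]
  · simp [fresnelExp]; ring

lemma norm_fresnelExp_div (y : ℝ) (z : ℂ) : ‖fresnelExp y / z‖ = 1 / ‖z‖ := by
  rw [norm_div, norm_fresnelExp]

lemma norm_ofReal_pow {y : ℝ} (hy : 0 < y) (n : ℕ) : ‖(y : ℂ) ^ n‖ = y ^ n := by
  rw [norm_pow, norm_real, Real.norm_of_nonneg hy.le]

lemma norm_four_pi_I_mul_pow {y : ℝ} (hy : 0 < y) (n : ℕ) :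
    ‖4 * π * I * (y : ℂ) ^ n‖ = 4 * π * y ^ n := by
  rw [norm_mul, norm_four_pi_I, norm_ofReal_pow hy]

lemma integral_fresnelExp_div_pow {ξ R : ℝ} (hξ : 0 < ξ) (hR : ξ ≤ R) (n : ℕ) :
    ∫ y in ξ..R, fresnelExp y / (y : ℂ) ^ n =
      fresnelExp R / (4 * π * I * (R : ℂ) ^ (n + 1)) - fresnelExp ξ / (4 * π * I * (ξ : ℂ) ^ (n + 1))
        + (n + 1) / (4 * π * I) * ∫ y in ξ..R, fresnelExp y / (y : ℂ) ^ (n + 2) := by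
  have hpos : ∀ y ∈ Set.uIcc ξ R, (y : ℂ) ≠ 0 := fun y hy =>
    ofReal_ne_zero.2 (hξ.trans_le (Set.uIcc_of_le hR ▸ hy).1).ne'
  have hu : ∀ y ∈ Set.uIcc ξ R, HasDerivAt (fun t : ℝ => (4 * π * I * (t : ℂ) ^ (n + 1))⁻¹)
      (-((n + 1) / (4 * π * I)) * (1 / (y : ℂ) ^ (n + 2))) y := by
    intro y hy
    have h := (((hasDerivAt_pow (n + 1) (y : ℂ)).const_mul (4 * π * I)).inv
      (mul_ne_zero four_pi_I_ne_zero (pow_ne_zero _ (hpos y hy)))).comp_ofReal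
    convert h using 1
    · rfl
    field_simp [four_pi_I_ne_zero, hpos y hy]
    push_cast
    ring
  have hu' : IntervalIntegrable (fun y : ℝ => -((n + 1) / (4 * π * I)) * (1 / (y : ℂ) ^ (n + 2)))
      volume ξ R :=
    (continuousOn_const.mul (continuousOn_const.div (by fun_prop)
      fun y hy => pow_ne_zero _ (hpos y hy))).intervalIntegrable
  have hv' : IntervalIntegrable (fun y : ℝ => 4 * π * I * y * fresnelExp y) volume ξ R :=
    (by fun_prop : Continuous fun y : ℝ => 4 * π * I * y * fresnelExp y).intervalIntegrable _ _
  have h := intervalIntegral.integral_mul_deriv_eq_deriv_mul hu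
    (fun y _ => hasDerivAt_fresnelExp y) hu' hv'
  have h_lhs : ∫ y in ξ..R, (4 * π * I * (y : ℂ) ^ (n + 1))⁻¹ * (4 * π * I * y * fresnelExp y) =
      ∫ y in ξ..R, fresnelExp y / (y : ℂ) ^ n := by
    refine intervalIntegral.integral_congr fun y hy => ?_
    field_simp [four_pi_I_ne_zero, hpos y hy]
    ring
  have h_rhs : ∫ y in ξ..R, -((n + 1) / (4 * π * I)) * (1 / (y : ℂ) ^ (n + 2)) * fresnelExp y =
      -((n + 1) / (4 * π * I)) * ∫ y in ξ..R, fresnelExp y / (y : ℂ) ^ (n + 2) := by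
    rw [← intervalIntegral.integral_const_mul]
    congr 1 with y
    ring
  rw [← h_lhs, h, h_rhs]
  simp only [div_eq_mul_inv]
  ring

lemma one_div_pow_eq_rpow_neg (y : ℝ) (n : ℕ) : 1 / y ^ n = y ^ (-(n : ℝ)) := by
  rw [Real.rpow_neg_natCast, zpow_neg, zpow_natCast, one_div]

lemma integrableOn_Ioi_one_div_pow_add_two {ξ : ℝ} (hξ : 0 < ξ) (n : ℕ) :
    IntegrableOn (fun y : ℝ => 1 / y ^ (n + 2)) (Set.Ioi ξ) := by
  simp_rw [one_div_pow_eq_rpow_neg]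
  exact integrableOn_Ioi_rpow_of_lt (by push_cast; linarith) hξ

lemma integral_Ioi_one_div_pow_add_two {ξ : ℝ} (hξ : 0 < ξ) (n : ℕ) :
    ∫ y in Set.Ioi ξ, 1 / y ^ (n + 2) = 1 / ((n + 1) * ξ ^ (n + 1)) := by
  simp_rw [one_div_pow_eq_rpow_neg]
  rw [integral_Ioi_rpow_of_lt (by push_cast; linarith) hξ,
    show -((n + 2 : ℕ) : ℝ) + 1 = -((n + 1 : ℕ) : ℝ) by push_cast; ring,
    ← one_div_pow_eq_rpow_neg]
  push_cast
  field_simp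

lemma integrableOn_Ioi_fresnelExp_div_pow_add_two {ξ : ℝ} (hξ : 0 < ξ) (n : ℕ) :
    IntegrableOn (fun y : ℝ => fresnelExp y / (y : ℂ) ^ (n + 2)) (Set.Ioi ξ) := by
  refine (integrableOn_Ioi_one_div_pow_add_two hξ n).mono' ?_ ?_
  · exact (continuous_fresnelExp.continuousOn.div (by fun_prop)
      fun y hy => pow_ne_zero _ (ofReal_ne_zero.2 (hξ.trans hy).ne')).aestronglyMeasurable
      measurableSet_Ioi
  · filter_upwards [ae_restrict_mem measurableSet_Ioi] with y hy
    rw [norm_fresnelExp_div, norm_ofReal_pow (hξ.trans hy)]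

lemma norm_integral_Ioi_fresnelExp_div_pow_add_two_le_one_div {ξ : ℝ} (hξ : 0 < ξ) (n : ℕ) :
    ‖∫ y in Set.Ioi ξ, fresnelExp y / (y : ℂ) ^ (n + 2)‖ ≤ 1 / ((n + 1) * ξ ^ (n + 1)) := by
  rw [← integral_Ioi_one_div_pow_add_two hξ n]
  refine norm_integral_le_of_norm_le (integrableOn_Ioi_one_div_pow_add_two hξ n) ?_
  filter_upwards [ae_restrict_mem measurableSet_Ioi] with y hy
  rw [norm_fresnelExp_div, norm_ofReal_pow (hξ.trans hy)]

lemma tendsto_fresnelExp_div_four_pi_I_mul_pow (n : ℕ) :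
    Tendsto (fun R : ℝ => fresnelExp R / (4 * π * I * (R : ℂ) ^ (n + 1))) atTop (nhds 0) := by
  refine squeeze_zero_norm' ?_ ((tendsto_pow_atTop n.succ_ne_zero).const_mul_atTop
    (by positivity : (0 : ℝ) < 4 * π)).inv_tendsto_atTop
  filter_upwards [eventually_gt_atTop 0] with R hR
  rw [norm_fresnelExp_div, norm_four_pi_I_mul_pow hR, one_div]
  rfl

lemma tendsto_integral_fresnelExp_div_pow {ξ : ℝ} (hξ : 0 < ξ) (n : ℕ) :
    Tendsto (fun R => ∫ y in ξ..R, fresnelExp y / (y : ℂ) ^ n) atTop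
      (nhds (-(fresnelExp ξ / (4 * π * I * (ξ : ℂ) ^ (n + 1)))
        + (n + 1) / (4 * π * I) * ∫ y in Set.Ioi ξ, fresnelExp y / (y : ℂ) ^ (n + 2))) := by
  have h_tail := intervalIntegral_tendsto_integral_Ioi ξ
    (integrableOn_Ioi_fresnelExp_div_pow_add_two hξ n) tendsto_id
  have h := ((tendsto_fresnelExp_div_four_pi_I_mul_pow n).sub_const
    (fresnelExp ξ / (4 * π * I * (ξ : ℂ) ^ (n + 1)))).add (h_tail.const_mul ((n + 1) / (4 * π * I)))
  rw [zero_sub] at h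
  refine h.congr' ?_
  filter_upwards [eventually_ge_atTop ξ] with R hR
  exact (integral_fresnelExp_div_pow hξ hR n).symm

lemma integral_Ioi_fresnelExp_div_pow_add_two {ξ : ℝ} (hξ : 0 < ξ) (n : ℕ) :
    ∫ y in Set.Ioi ξ, fresnelExp y / (y : ℂ) ^ (n + 2) =
      -(fresnelExp ξ / (4 * π * I * (ξ : ℂ) ^ (n + 3)))
        + (n + 3) / (4 * π * I) * ∫ y in Set.Ioi ξ, fresnelExp y / (y : ℂ) ^ (n + 4) := by
  have h := tendsto_integral_fresnelExp_div_pow hξ (n + 2)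
  push_cast at h
  rw [show (n : ℂ) + 2 + 1 = n + 3 by ring] at h
  exact tendsto_nhds_unique (intervalIntegral_tendsto_integral_Ioi ξ
    (integrableOn_Ioi_fresnelExp_div_pow_add_two hξ n) tendsto_id) h

lemma norm_integral_Ioi_fresnelExp_div_pow_add_two_le {ξ : ℝ} (hξ : 0 < ξ) (n : ℕ) :
    ‖∫ y in Set.Ioi ξ, fresnelExp y / (y : ℂ) ^ (n + 2)‖ ≤ 1 / (2 * π * ξ ^ (n + 3)) := by
  have h_coeff : ‖((n : ℂ) + 3) / (4 * π * I)‖ = (n + 3) / (4 * π) := by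
    rw [norm_div, norm_four_pi_I, show (n : ℂ) + 3 = ((n + 3 : ℕ) : ℂ) by push_cast; ring,
      Complex.norm_natCast]
    push_cast
    rfl
  have h_tail := norm_integral_Ioi_fresnelExp_div_pow_add_two_le_one_div hξ (n + 2)
  push_cast at h_tail
  rw [integral_Ioi_fresnelExp_div_pow_add_two hξ n]
  calc _ ≤ ‖fresnelExp ξ / (4 * π * I * (ξ : ℂ) ^ (n + 3))‖
        + ‖((n : ℂ) + 3) / (4 * π * I)‖ * ‖∫ y in Set.Ioi ξ, fresnelExp y / (y : ℂ) ^ (n + 4)‖ := by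
        rw [← norm_neg (fresnelExp ξ / _), ← norm_mul]
        exact norm_add_le _ _
    _ ≤ 1 / (4 * π * ξ ^ (n + 3)) + (n + 3) / (4 * π) * (1 / ((n + 2 + 1) * ξ ^ (n + 2 + 1))) := by
        rw [norm_fresnelExp_div, norm_four_pi_I_mul_pow hξ, h_coeff]
        gcongr
    _ = 1 / (2 * π * ξ ^ (n + 3)) := by
        field_simp
        ring

/-- tail Fresnel integral asymptotics: there are absolute constants
`c₁ ∈ ℂ` and `C > 0` so that for every `ξ ≥ 1` the improper integral
`∫_ξ^∞ e^{2πi y²} dy` converges to some limit `L` and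
`‖L - e^{2πi ξ²} · c₁ / ξ‖ ≤ C / ξ²`. -/
theorem tail_fresnel_asymptotic :
    ∃ (c₁ : ℂ) (C : ℝ), 0 < C ∧ ∀ ξ : ℝ, 1 ≤ ξ →
      ∃ L : ℂ,
        Tendsto (fun R : ℝ => ∫ y in ξ..R,
            Complex.exp (2 * Real.pi * Complex.I * ((y ^ 2 : ℝ) : ℂ))) atTop (nhds L) ∧
        ‖L - Complex.exp (2 * Real.pi * Complex.I * ((ξ ^ 2 : ℝ) : ℂ)) * c₁ / (ξ : ℂ)‖
          ≤ C / ξ ^ 2 := by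
  refine ⟨-(4 * π * I)⁻¹, (8 * π ^ 2)⁻¹, by positivity, fun ξ hξ => ?_⟩
  have hξ0 : 0 < ξ := one_pos.trans_le hξ
  have h_lim := tendsto_integral_fresnelExp_div_pow hξ0 0
  simp only [pow_zero, div_one, CharP.cast_eq_zero, zero_add, pow_one] at h_lim
  refine ⟨_, h_lim, ?_⟩
  change ‖_ - fresnelExp ξ * _ / _‖ ≤ _
  have h_rem := norm_integral_Ioi_fresnelExp_div_pow_add_two_le hξ0 0
  simp only [zero_add] at h_rem
  rw [show fresnelExp ξ * -(4 * π * I)⁻¹ / ξ = -(fresnelExp ξ / (4 * π * I * ξ)) by ring,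
    add_sub_cancel_left, norm_mul, one_div, norm_inv, norm_four_pi_I]
  calc (4 * π)⁻¹ * _ ≤ (4 * π)⁻¹ * (1 / (2 * π * ξ ^ 3)) := by gcongr
    _ = (8 * π ^ 2)⁻¹ / ξ ^ 3 := by field_simp; ring
    _ ≤ (8 * π ^ 2)⁻¹ / ξ ^ 2 := by gcongr; norm_num
end

section
/- Van der Corput second derivative test: if φ : ℝ → ℝ is twice continuously differentiable on [a,b] with φ''(y) ≥ λ > 0 for all y ∈ [a,b], then |∫_a^b e^{iφ(y)} dy| ≤ C λ^{-1/2} for an absolute constant C (independent of a, b, φ). -/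
/-!
Since `φ'' ≥ λ`, the derivative `φ'` grows at rate at least `λ`, so there is a point `x₀ ∈ [a, b]`
(a zero of `φ'`, or an endpoint if there is none) with `|φ'(y)| ≥ λ |y - x₀|`. Outside the
`λ^{-1/2}`-neighbourhood of `x₀` we then have `|φ'| ≥ λ^{1/2}`, and integrating by parts against
the monotone `φ'` bounds each of the (at most two) outer integrals by `4 λ^{-1/2}`; the integral
over the neighbourhood itself is at most its length `2 λ^{-1/2}`.
-/

open MeasureTheory Complex Set

theorem le_on_Icc_of_le_on_Ioo {α β : Type*} [LinearOrder α] [TopologicalSpace α] [OrderTopology α]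
    [DenselyOrdered α] [LinearOrder β] [TopologicalSpace β] [OrderClosedTopology β]
    {f g : α → β} {c d : α} (hcd : c < d) (hf : ContinuousOn f (Icc c d))
    (hg : ContinuousOn g (Icc c d)) (h : ∀ y ∈ Ioo c d, f y ≤ g y) :
    ∀ y ∈ Icc c d, f y ≤ g y := by
  intro y hy
  have hy' : y ∈ closure (Ioo c d) := by rwa [closure_Ioo hcd.ne]
  exact ContinuousWithinAt.closure_le hy' ((hf y hy).mono Ioo_subset_Icc_self)
    ((hg y hy).mono Ioo_subset_Icc_self) h

theorem hasDerivAt_cexp_I_mul_div {φ ψ : ℝ → ℝ} {χ y : ℝ} (hφ : HasDerivAt φ (ψ y) y)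
    (hψ : HasDerivAt ψ χ y) (hψ0 : ψ y ≠ 0) :
    HasDerivAt (fun x => exp (I * φ x) / (I * ψ x))
      (exp (I * φ y) + I * χ * exp (I * φ y) / (ψ y : ℂ) ^ 2) y := by
  have hexp : HasDerivAt (fun x => exp (I * φ x)) (exp (I * φ y) * (I * ψ y)) y :=
    (hφ.ofReal_comp.const_mul I).cexp
  have hden : HasDerivAt (fun x => I * (ψ x : ℂ)) (I * χ) y := hψ.ofReal_comp.const_mul I
  refine (hexp.div hden (mul_ne_zero I_ne_zero (ofReal_ne_zero.2 hψ0))).congr_deriv ?_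
  have : (ψ y : ℂ) ≠ 0 := ofReal_ne_zero.2 hψ0
  rw [mul_pow, I_sq]
  field_simp
  ring_nf
  rw [I_sq]
  ring

theorem integral_div_sq_eq_inv_sub_inv {c d : ℝ} {ψ χ : ℝ → ℝ} (hcd : c ≤ d)
    (hψc : ContinuousOn ψ (Icc c d)) (hχc : ContinuousOn χ (Icc c d))
    (hψ : ∀ y ∈ Ioo c d, HasDerivAt ψ (χ y) y) (hψ0 : ∀ y ∈ Icc c d, ψ y ≠ 0) :
    ∫ y in c..d, χ y / ψ y ^ 2 = (ψ c)⁻¹ - (ψ d)⁻¹ := by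
  rw [show (ψ c)⁻¹ - (ψ d)⁻¹ = -(ψ d)⁻¹ - -(ψ c)⁻¹ by ring]
  refine intervalIntegral.integral_eq_sub_of_hasDerivAt_of_le hcd (hψc.inv₀ hψ0).neg
    (fun y hy => ?_) ((hχc.div (hψc.pow 2) fun y hy => pow_ne_zero 2 (hψ0 y hy))
      |>.intervalIntegrable_of_Icc hcd)
  convert ((hψ y hy).inv (hψ0 y (Ioo_subset_Icc_self hy))).neg using 1
  ring

theorem norm_integral_I_mul_mul_cexp_div_sq_le {c d μ : ℝ} {φ ψ χ : ℝ → ℝ} (hcd : c ≤ d)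
    (hμ : 0 < μ) (hψc : ContinuousOn ψ (Icc c d)) (hχc : ContinuousOn χ (Icc c d))
    (hψ : ∀ y ∈ Ioo c d, HasDerivAt ψ (χ y) y) (hχ : ∀ y ∈ Icc c d, 0 ≤ χ y)
    (hψμ : ∀ y ∈ Icc c d, μ ≤ |ψ y|) :
    ‖∫ y in c..d, I * χ y * exp (I * φ y) / (ψ y : ℂ) ^ 2‖ ≤ 2 / μ := by
  have hψ0 : ∀ y ∈ Icc c d, ψ y ≠ 0 := fun y hy => abs_pos.1 (hμ.trans_le (hψμ y hy))
  have hinv : ∀ y ∈ Icc c d, |(ψ y)⁻¹| ≤ 1 / μ := fun y hy => by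
    rw [abs_inv, one_div]; exact inv_anti₀ hμ (hψμ y hy)
  calc _ ≤ ∫ y in c..d, χ y / ψ y ^ 2 := by
        refine intervalIntegral.norm_integral_le_of_norm_le hcd
          (Filter.Eventually.of_forall fun y hy => le_of_eq ?_)
          ((hχc.div (hψc.pow 2) fun y hy => pow_ne_zero 2 (hψ0 y hy)).intervalIntegrable_of_Icc hcd)
        simp [norm_exp_I_mul_ofReal, abs_of_nonneg (hχ y (Ioc_subset_Icc_self hy))]
    _ = (ψ c)⁻¹ - (ψ d)⁻¹ := integral_div_sq_eq_inv_sub_inv hcd hψc hχc hψ hψ0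
    _ ≤ |(ψ c)⁻¹| + |(ψ d)⁻¹| := (le_abs_self _).trans (abs_sub _ _)
    _ ≤ 1 / μ + 1 / μ := add_le_add (hinv c (left_mem_Icc.2 hcd)) (hinv d (right_mem_Icc.2 hcd))
    _ = 2 / μ := by ring

theorem norm_integral_cexp_I_mul_le_of_le_abs_deriv {c d μ : ℝ} {φ ψ χ : ℝ → ℝ} (hcd : c ≤ d)
    (hμ : 0 < μ) (hφc : ContinuousOn φ (Icc c d)) (hψc : ContinuousOn ψ (Icc c d))
    (hχc : ContinuousOn χ (Icc c d)) (hφ : ∀ y ∈ Ioo c d, HasDerivAt φ (ψ y) y)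
    (hψ : ∀ y ∈ Ioo c d, HasDerivAt ψ (χ y) y) (hχ : ∀ y ∈ Ioo c d, 0 ≤ χ y)
    (hψμ : ∀ y ∈ Ioo c d, μ ≤ |ψ y|) :
    ‖∫ y in c..d, exp (I * φ y)‖ ≤ 4 / μ := by
  rcases hcd.eq_or_lt with rfl | hcd
  · simp only [intervalIntegral.integral_same, norm_zero]; positivity
  have hψμ' := le_on_Icc_of_le_on_Ioo hcd continuousOn_const hψc.abs hψμ
  have hψ0 : ∀ y ∈ Icc c d, (ψ y : ℂ) ≠ 0 := fun y hy =>
    ofReal_ne_zero.2 (abs_pos.1 (hμ.trans_le (hψμ' y hy)))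
  set g : ℝ → ℂ := fun y => exp (I * φ y) / (I * ψ y)
  set r : ℝ → ℂ := fun y => I * χ y * exp (I * φ y) / (ψ y : ℂ) ^ 2
  have he : ContinuousOn (fun y => exp (I * φ y)) (Icc c d) := by fun_prop
  have hr : ContinuousOn r (Icc c d) :=
    ((continuous_ofReal.comp_continuousOn hχc).const_smul I |>.mul he).div (by fun_prop)
      fun y hy => pow_ne_zero 2 (hψ0 y hy)
  have hg : ContinuousOn g (Icc c d) :=
    he.div (by fun_prop) fun y hy => mul_ne_zero I_ne_zero (hψ0 y hy)
  have hftc : ∫ y in c..d, exp (I * φ y) + r y = g d - g c :=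
    intervalIntegral.integral_eq_sub_of_hasDerivAt_of_le hcd.le hg
      (fun y hy => hasDerivAt_cexp_I_mul_div (hφ y hy) (hψ y hy)
        (ofReal_ne_zero.1 (hψ0 y (Ioo_subset_Icc_self hy))))
      ((he.add hr).intervalIntegrable_of_Icc hcd.le)
  rw [intervalIntegral.integral_add (he.intervalIntegrable_of_Icc hcd.le)
    (hr.intervalIntegrable_of_Icc hcd.le)] at hftc
  have hgμ : ∀ y ∈ Icc c d, ‖g y‖ ≤ 1 / μ := fun y hy => by
    simpa [g, norm_exp_I_mul_ofReal] using one_div_le_one_div_of_le hμ (hψμ' y hy)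
  calc ‖∫ y in c..d, exp (I * φ y)‖ = ‖g d - g c - ∫ y in c..d, r y‖ := by
        rw [← hftc, add_sub_cancel_right]
    _ ≤ ‖g d‖ + ‖g c‖ + ‖∫ y in c..d, r y‖ := norm_sub_le_of_le (norm_sub_le _ _) le_rfl
    _ ≤ 1 / μ + 1 / μ + 2 / μ := by
        gcongr
        · exact hgμ d (right_mem_Icc.2 hcd.le)
        · exact hgμ c (left_mem_Icc.2 hcd.le)
        · exact norm_integral_I_mul_mul_cexp_div_sq_le hcd.le hμ hψc hχc hψ
            (le_on_Icc_of_le_on_Ioo hcd continuousOn_const hχc hχ) hψμ'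
    _ = 4 / μ := by ring

theorem exists_mul_abs_sub_le_abs {a b lam : ℝ} {ψ : ℝ → ℝ} (hab : a ≤ b)
    (hψc : ContinuousOn ψ (Icc a b))
    (hψ : ∀ x ∈ Icc a b, ∀ y ∈ Icc a b, x ≤ y → lam * (y - x) ≤ ψ y - ψ x) :
    ∃ x₀ ∈ Icc a b, ∀ y ∈ Icc a b, lam * |y - x₀| ≤ |ψ y| := by
  have ha := left_mem_Icc.2 hab
  have hb := right_mem_Icc.2 hab
  by_cases hψa : 0 < ψ a
  · refine ⟨a, ha, fun y hy => ?_⟩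
    rw [abs_of_nonneg (sub_nonneg.2 hy.1)]
    linarith [hψ a ha y hy hy.1, le_abs_self (ψ y)]
  by_cases hψb : ψ b < 0
  · refine ⟨b, hb, fun y hy => ?_⟩
    rw [abs_of_nonpos (sub_nonpos.2 hy.2)]
    linarith [hψ y hy b hb hy.2, neg_abs_le (ψ y)]
  push Not at hψa hψb
  obtain ⟨x₀, hx₀, hψx₀⟩ := intermediate_value_Icc hab hψc ⟨hψa, hψb⟩
  refine ⟨x₀, hx₀, fun y hy => ?_⟩
  rcases le_total x₀ y with h | h
  · rw [abs_of_nonneg (sub_nonneg.2 h)]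
    linarith [hψ x₀ hx₀ y hy h, le_abs_self (ψ y)]
  · rw [abs_of_nonpos (sub_nonpos.2 h)]
    linarith [hψ y hy x₀ hx₀ h, neg_abs_le (ψ y)]

theorem norm_intervalIntegral_le_add_add {E : Type*} [NormedAddCommGroup E] [NormedSpace ℝ E]
    {f : ℝ → E} {a u v b : ℝ} (hf : IntervalIntegrable f volume a b) (hau : a ≤ u) (huv : u ≤ v)
    (hvb : v ≤ b) :
    ‖∫ y in a..b, f y‖ ≤ ‖∫ y in a..u, f y‖ + ‖∫ y in u..v, f y‖ + ‖∫ y in v..b, f y‖ := by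
  have hint {c d : ℝ} (hac : a ≤ c) (hcd : c ≤ d) (hdb : d ≤ b) : IntervalIntegrable f volume c d :=
    hf.mono_set (uIcc_subset_uIcc (mem_uIcc_of_le hac (hcd.trans hdb))
      (mem_uIcc_of_le (hac.trans hcd) hdb))
  rw [← intervalIntegral.integral_add_adjacent_intervals (hint le_rfl (hau.trans huv) hvb)
      (hint (hau.trans huv) hvb le_rfl),
    ← intervalIntegral.integral_add_adjacent_intervals (hint le_rfl hau (huv.trans hvb))
      (hint hau huv hvb)]
  exact norm_add₃_le

theorem exists_split_Icc_around {a b x₀ δ : ℝ} (hx₀ : x₀ ∈ Icc a b) (hδ : 0 ≤ δ) :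
    ∃ u v, a ≤ u ∧ u ≤ v ∧ v ≤ b ∧ v - u ≤ 2 * δ ∧
      (∀ y ∈ Ioo a u, δ ≤ |y - x₀|) ∧ ∀ y ∈ Ioo v b, δ ≤ |y - x₀| := by
  refine ⟨max a (x₀ - δ), min b (x₀ + δ), le_max_left _ _,
    max_le (le_min (hx₀.1.trans hx₀.2) (by linarith [hx₀.1])) (le_min (by linarith [hx₀.2])
      (by linarith)), min_le_left _ _,
    by linarith [min_le_right b (x₀ + δ), le_max_right a (x₀ - δ)], fun y hy => ?_, fun y hy => ?_⟩
  · have : y < x₀ - δ := (lt_max_iff.1 hy.2).resolve_left hy.1.not_gt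
    rw [abs_sub_comm]; exact le_abs.2 (Or.inl (by linarith))
  · have : x₀ + δ < y := (min_lt_iff.1 hy.1).resolve_left hy.2.not_gt
    exact le_abs.2 (Or.inl (by linarith))

theorem norm_integral_cexp_I_mul_le_of_le_second_deriv {a b lam : ℝ} {φ ψ χ : ℝ → ℝ}
    (hlam : 0 < lam) (hab : a ≤ b) (hφc : ContinuousOn φ (Icc a b)) (hψc : ContinuousOn ψ (Icc a b))
    (hχc : ContinuousOn χ (Icc a b)) (hφ : ∀ y ∈ Ioo a b, HasDerivAt φ (ψ y) y)
    (hψ : ∀ y ∈ Ioo a b, HasDerivAt ψ (χ y) y) (hχ : ∀ y ∈ Ioo a b, lam ≤ χ y) :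
    ‖∫ y in a..b, exp (I * φ y)‖ ≤ 10 / √lam := by
  have hμ : 0 < √lam := Real.sqrt_pos.2 hlam
  have hmvt : ∀ x ∈ Icc a b, ∀ y ∈ Icc a b, x ≤ y → lam * (y - x) ≤ ψ y - ψ x := by
    refine (convex_Icc a b).mul_sub_le_image_sub_of_le_deriv hψc ?_ ?_ <;> rw [interior_Icc]
    · exact fun y hy => (hψ y hy).differentiableAt.differentiableWithinAt
    · exact fun y hy => (hψ y hy).deriv ▸ hχ y hy
  obtain ⟨x₀, hx₀, hψx₀⟩ := exists_mul_abs_sub_le_abs hab hψc hmvt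
  set δ := 1 / √lam
  have hδ : 0 ≤ δ := by positivity
  have hlamδ : lam * δ = √lam := by rw [mul_one_div, Real.div_sqrt]
  have hpiece : ∀ c d, a ≤ c → c ≤ d → d ≤ b → (∀ y ∈ Ioo c d, δ ≤ |y - x₀|) →
      ‖∫ y in c..d, exp (I * φ y)‖ ≤ 4 / √lam := by
    intro c d hac hcd hdb hfar
    have hsub : Icc c d ⊆ Icc a b := Icc_subset_Icc hac hdb
    have hsub' : Ioo c d ⊆ Ioo a b := Ioo_subset_Ioo hac hdb
    refine norm_integral_cexp_I_mul_le_of_le_abs_deriv hcd hμ (hφc.mono hsub) (hψc.mono hsub)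
      (hχc.mono hsub) (fun y hy => hφ y (hsub' hy)) (fun y hy => hψ y (hsub' hy))
      (fun y hy => hlam.le.trans (hχ y (hsub' hy))) fun y hy => ?_
    calc √lam = lam * δ := hlamδ.symm
      _ ≤ lam * |y - x₀| := mul_le_mul_of_nonneg_left (hfar y hy) hlam.le
      _ ≤ |ψ y| := hψx₀ y (hsub (Ioo_subset_Icc_self hy))
  obtain ⟨u, v, hau, huv, hvb, hvu, hL, hR⟩ := exists_split_Icc_around hx₀ hδ
  have hM : ‖∫ y in u..v, exp (I * φ y)‖ ≤ 2 / √lam := by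
    calc _ ≤ 1 * |v - u| :=
          intervalIntegral.norm_integral_le_of_norm_le_const fun y _ => (norm_exp_I_mul_ofReal _).le
      _ ≤ 2 * δ := by rwa [one_mul, abs_of_nonneg (sub_nonneg.2 huv)]
      _ = 2 / √lam := by ring
  have he : ContinuousOn (fun y => exp (I * φ y)) (Icc a b) := by fun_prop
  calc _ ≤ _ := norm_intervalIntegral_le_add_add (he.intervalIntegrable_of_Icc hab) hau huv hvb
    _ ≤ 4 / √lam + 2 / √lam + 4 / √lam := by
        gcongr
        exacts [hpiece a u le_rfl hau (huv.trans hvb) hL,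
          hpiece v b (hau.trans huv) hvb le_rfl hR]
    _ = 10 / √lam := by ring

/-- van der Corput second derivative test.  There is an absolute
constant `C` such that for every `a ≤ b`, every `φ : ℝ → ℝ` that is twice
continuously differentiable on `[a,b]` with second derivative bounded below by
`λ > 0` on `[a,b]`, one has `|∫_a^b e^{iφ(y)} dy| ≤ C λ^{-1/2}`. -/
theorem van_der_corput_second_derivative :
    ∃ C : ℝ, 0 < C ∧ ∀ (a b : ℝ) (φ : ℝ → ℝ) (lam : ℝ), 0 < lam → a ≤ b →
      ContDiffOn ℝ 2 φ (Set.Icc a b) →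
      (∀ y ∈ Set.Icc a b, lam ≤ iteratedDerivWithin 2 φ (Set.Icc a b) y) →
      ‖∫ y in a..b, Complex.exp (Complex.I * ((φ y : ℝ) : ℂ))‖ ≤ C / Real.sqrt lam := by
  refine ⟨10, by norm_num, fun a b φ lam hlam hab hφ hφ'' => ?_⟩
  rcases hab.eq_or_lt with rfl | hab
  · simp only [intervalIntegral.integral_same, norm_zero]; positivity
  have hs : UniqueDiffOn ℝ (Icc a b) := uniqueDiffOn_Icc hab
  have hφ' : ContDiffOn ℝ 1 (derivWithin φ (Icc a b)) (Icc a b) := hφ.derivWithin hs (by norm_num)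
  have hderiv {f : ℝ → ℝ} (hf : ContDiffOn ℝ 1 f (Icc a b)) :
      ∀ y ∈ Ioo a b, HasDerivAt f (derivWithin f (Icc a b) y) y := fun y hy =>
    (hf.differentiableOn one_ne_zero y (Ioo_subset_Icc_self hy)).hasDerivWithinAt.hasDerivAt
      (Icc_mem_nhds hy.1 hy.2)
  rw [iteratedDerivWithin_succ', iteratedDerivWithin_one] at hφ''
  exact norm_integral_cexp_I_mul_le_of_le_second_deriv hlam hab.le hφ.continuousOn hφ'.continuousOn
    (hφ'.continuousOn_derivWithin hs le_rfl) (hderiv (hφ.of_le one_le_two)) (hderiv hφ')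
    fun y hy => hφ'' y (Ioo_subset_Icc_self hy)
end

section
/- Decay of inner products of wave packets: let φ be a Schwartz function and for a rectangle σ = I_σ × ω_σ of area 1 define φ_σ(x) = |I_σ|^{−1/2} e^{2πi c(ω_σ) x} φ((x − c(I_σ))/|I_σ|), where c(J) denotes the center of J. If σ, σ' are two such rectangles with ω_σ ⊆ ω_{σ'} (hence |I_{σ'}| ≤ |I_σ|), then |⟨φ_σ, φ_{σ'}⟩| ≤ C √(|I_{σ'}|/|I_σ|) · (1 + dist(c(I_{σ'}), I_σ)/|I_σ|)^{−100}, where C depends only on finitely many Schwartz seminorms of φ and we additionally assume φ̂ is supported in [−1/40, 1/40] so that φ̂_σ is supported in ω_σ-adapted intervals. -/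
/-! The inclusion `ω_σ ⊆ ω_{σ'}` forces `L' ≤ L`, and then the Peetre-type inequality
`1 + dist(c', I_σ)/L ≤ (1 + |x - c|/L) (1 + |x - c'|/L')` turns the `N`-th order decay of
`φ((x - c)/L)` into the factor `(1 + dist(c', I_σ)/L)^{-N}`, uniformly in `x`. Two further orders
of decay of `φ((x - c')/L')` leave an integrable profile whose integral is `L'` times a constant,
and with the normalisations `(L L')^{-1/2}` this gives `√(L'/L)`. -/

open MeasureTheory Complex Real Set Metric ComplexConjugate
open scoped SchwartzMap

namespace SchwartzMap

variable {E F : Type*} [NormedAddCommGroup E] [NormedSpace ℝ E]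
  [NormedAddCommGroup F] [NormedSpace ℝ F]

theorem exists_norm_le_mul_inv_one_add_norm_pow (φ : 𝓢(E, F)) (k : ℕ) :
    ∃ S, 0 ≤ S ∧ ∀ x, ‖φ x‖ ≤ S * ((1 + ‖x‖) ^ k)⁻¹ := by
  refine ⟨2 ^ k * (Finset.Iic (k, 0)).sup (fun m ↦ SchwartzMap.seminorm ℝ m.1 m.2) φ,
    by positivity, fun x ↦ ?_⟩
  rw [← div_eq_mul_inv, le_div_iff₀' (by positivity)]
  simpa using one_add_le_sup_seminorm_apply (𝕜 := ℝ) (m := (k, 0)) le_rfl le_rfl φ x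

end SchwartzMap

theorem le_of_Icc_sub_add_subset_Icc_sub_add {c c' r r' : ℝ} (hr : 0 ≤ r)
    (h : Icc (c - r) (c + r) ⊆ Icc (c' - r') (c' + r')) : r ≤ r' := by
  obtain ⟨hleft, hright⟩ := (Icc_subset_Icc_iff (by linarith)).1 h
  linarith

theorem one_add_infDist_div_le {c c' L L' : ℝ} (hL' : 0 < L') (hLL : L' ≤ L) (x : ℝ) :
    1 + infDist c' (Icc (c - L / 2) (c + L / 2)) / L ≤
      (1 + |(x - c) / L|) * (1 + |(x - c') / L'|) := by
  have hL : 0 < L := hL'.trans_le hLL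
  have hdist : infDist c' (Icc (c - L / 2) (c + L / 2)) ≤ |x - c| + |x - c'| :=
    calc _ ≤ dist c' c := infDist_le_dist_of_mem (y := c) (by constructor <;> linarith)
      _ ≤ |x - c| + |x - c'| := by
        rw [Real.dist_eq, abs_sub_comm x c', add_comm]; exact abs_sub_le _ _ _
  have hsum : infDist c' (Icc (c - L / 2) (c + L / 2)) / L ≤ |x - c| / L + |x - c'| / L' :=
    calc _ ≤ (|x - c| + |x - c'|) / L := by gcongr
      _ ≤ |x - c| / L + |x - c'| / L' := by rw [add_div]; gcongr
  have ha : 0 ≤ |x - c| / L := by positivity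
  have hb : 0 ≤ |x - c'| / L' := by positivity
  rw [abs_div, abs_div, abs_of_pos hL, abs_of_pos hL']
  nlinarith [mul_nonneg ha hb]

theorem integral_comp_sub_div {G : Type*} [NormedAddCommGroup G] [NormedSpace ℝ G]
    (g : ℝ → G) (c L : ℝ) : ∫ x, g ((x - c) / L) = |L| • ∫ y, g y := by
  rw [integral_sub_right_eq_self (fun y ↦ g (y / L)), Measure.integral_comp_div]

/-- `wavePacket φ c ξ L` is the paper's `φ_σ` for the tile with `c(I_σ) = c`, `c(ω_σ) = ξ` and
`|I_σ| = L`. -/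
noncomputable def wavePacket (φ : ℝ → ℂ) (c ξ L x : ℝ) : ℂ :=
  (((√L)⁻¹ : ℝ) : ℂ) * Complex.exp (2 * π * I * ((ξ * x : ℝ) : ℂ)) * φ ((x - c) / L)

theorem norm_wavePacket (φ : ℝ → ℂ) (c ξ L x : ℝ) :
    ‖wavePacket φ c ξ L x‖ = (√L)⁻¹ * ‖φ ((x - c) / L)‖ := by
  have hphase : 2 * π * I * ((ξ * x : ℝ) : ℂ) = ((2 * π * ξ * x : ℝ) : ℂ) * I := by
    push_cast; ring
  rw [wavePacket, norm_mul, norm_mul, hphase, Complex.norm_exp_ofReal_mul_I, Complex.norm_real,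
    Real.norm_of_nonneg (by positivity), mul_one]

theorem norm_wavePacket_mul_conj_le {φ : ℝ → ℂ} {S₁ S₂ : ℝ} {N : ℕ}
    (hS₁ : 0 ≤ S₁) (hS₂ : 0 ≤ S₂) (h₁ : ∀ y, ‖φ y‖ ≤ S₁ * ((1 + |y|) ^ N)⁻¹)
    (h₂ : ∀ y, ‖φ y‖ ≤ S₂ * ((1 + |y|) ^ (N + 2))⁻¹)
    {cI cI' cω cω' L L' : ℝ} (hL' : 0 < L') (hLL : L' ≤ L) (x : ℝ) :
    ‖wavePacket φ cI cω L x * conj (wavePacket φ cI' cω' L' x)‖ ≤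
      (√L)⁻¹ * (√L')⁻¹ * (S₁ * S₂) *
        ((1 + infDist cI' (Icc (cI - L / 2) (cI + L / 2)) / L) ^ N)⁻¹ *
          ((1 + |(x - cI') / L'|) ^ 2)⁻¹ := by
  set u := (x - cI) / L
  set v := (x - cI') / L'
  have hD : 0 ≤ infDist cI' (Icc (cI - L / 2) (cI + L / 2)) / L :=
    div_nonneg infDist_nonneg (hL'.le.trans hLL)
  have hweight : ((1 + |u|) ^ N)⁻¹ * ((1 + |v|) ^ N)⁻¹ ≤
      ((1 + infDist cI' (Icc (cI - L / 2) (cI + L / 2)) / L) ^ N)⁻¹ := by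
    rw [← mul_inv, ← mul_pow]
    exact inv_anti₀ (by positivity)
      (pow_le_pow_left₀ (by positivity) (one_add_infDist_div_le hL' hLL x) N)
  rw [norm_mul, Complex.norm_conj, norm_wavePacket, norm_wavePacket]
  calc _ ≤ (√L)⁻¹ * (S₁ * ((1 + |u|) ^ N)⁻¹) *
        ((√L')⁻¹ * (S₂ * ((1 + |v|) ^ (N + 2))⁻¹)) := by
        gcongr
        exacts [h₁ u, h₂ v]
    _ = (√L)⁻¹ * (√L')⁻¹ * (S₁ * S₂) * (((1 + |u|) ^ N)⁻¹ * ((1 + |v|) ^ N)⁻¹) *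
          ((1 + |v|) ^ 2)⁻¹ := by
        rw [pow_add, mul_inv]; ring
    _ ≤ _ := by gcongr

theorem SchwartzMap.exists_norm_integral_wavePacket_mul_conj_le (φ : 𝓢(ℝ, ℂ)) (N : ℕ) :
    ∃ C, 0 < C ∧ ∀ cI cI' cω cω' L L' : ℝ, 0 < L' → L' ≤ L →
      ‖∫ x, wavePacket φ cI cω L x * conj (wavePacket φ cI' cω' L' x)‖ ≤
        C * √(L' / L) * ((1 + infDist cI' (Icc (cI - L / 2) (cI + L / 2)) / L) ^ N)⁻¹ := by
  obtain ⟨S₁, hS₁, h₁⟩ := φ.exists_norm_le_mul_inv_one_add_norm_pow N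
  obtain ⟨S₂, hS₂, h₂⟩ := φ.exists_norm_le_mul_inv_one_add_norm_pow (N + 2)
  simp only [Real.norm_eq_abs] at h₁ h₂
  have hint : Integrable fun y : ℝ ↦ ((1 + |y|) ^ 2)⁻¹ := by
    simpa [rpow_neg, rpow_natCast] using
      integrable_one_add_norm (E := ℝ) (μ := volume) (r := 2) (by norm_num)
  set A := ∫ y : ℝ, ((1 + |y|) ^ 2)⁻¹
  have hA : 0 ≤ A := integral_nonneg fun y ↦ by positivity
  refine ⟨S₁ * S₂ * A + 1, by positivity, fun cI cI' cω cω' L L' hL' hLL ↦ ?_⟩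
  have hL : 0 < L := hL'.trans_le hLL
  set w := ((1 + infDist cI' (Icc (cI - L / 2) (cI + L / 2)) / L) ^ N)⁻¹
  have hw : 0 ≤ w := by
    have : 0 ≤ infDist cI' (Icc (cI - L / 2) (cI + L / 2)) / L := div_nonneg infDist_nonneg hL.le
    positivity
  have hscale : (√L)⁻¹ * (√L')⁻¹ * L' = √(L' / L) := by
    have := mul_self_sqrt hL'.le
    rw [sqrt_div hL'.le]
    field_simp
    linarith
  calc _ ≤ ∫ x, (√L)⁻¹ * (√L')⁻¹ * (S₁ * S₂) * w * ((1 + |(x - cI') / L'|) ^ 2)⁻¹ :=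
        norm_integral_le_of_norm_le ((hint.comp_div hL'.ne').comp_sub_right cI' |>.const_mul _)
          (ae_of_all _ (norm_wavePacket_mul_conj_le hS₁ hS₂ h₁ h₂ hL' hLL))
    _ = S₁ * S₂ * A * √(L' / L) * w := by
        rw [integral_const_mul, integral_comp_sub_div (fun y ↦ ((1 + |y|) ^ 2)⁻¹),
          abs_of_pos hL', smul_eq_mul, ← hscale]
        ring
    _ ≤ (S₁ * S₂ * A + 1) * √(L' / L) * w := by gcongr; linarith

theorem wave_packet_inner_product_decay_general (φ : SchwartzMap ℝ ℂ) :
    ∃ C : ℝ, 0 < C ∧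
      ∀ cI cI' cω cω' L L' : ℝ, 0 < L → 0 < L' →
        Set.Icc (cω - 1/(2*L)) (cω + 1/(2*L)) ⊆ Set.Icc (cω' - 1/(2*L')) (cω' + 1/(2*L')) →
        ‖∫ x : ℝ,
            (((Real.sqrt L)⁻¹ : ℝ) : ℂ) *
              Complex.exp (2 * Real.pi * Complex.I * ((cω * x : ℝ) : ℂ)) * φ ((x - cI)/L) *
            (starRingEnd ℂ)
              ((((Real.sqrt L')⁻¹ : ℝ) : ℂ) *
                Complex.exp (2 * Real.pi * Complex.I * ((cω' * x : ℝ) : ℂ)) * φ ((x - cI')/L'))‖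
          ≤ C * Real.sqrt (L'/L) *
              ((1 + Metric.infDist cI' (Set.Icc (cI - L/2) (cI + L/2)) / L) ^ (100:ℕ))⁻¹ := by
  obtain ⟨C, hC, hdecay⟩ := φ.exists_norm_integral_wavePacket_mul_conj_le 100
  refine ⟨C, hC, fun cI cI' cω cω' L L' hL hL' hω ↦ ?_⟩
  have hLL : L' ≤ L := by
    have := le_of_Icc_sub_add_subset_Icc_sub_add (by positivity) hω
    rwa [one_div_le_one_div (by positivity) (by positivity), mul_le_mul_iff_right₀ two_pos] at this
  exact hdecay cI cI' cω cω' L L' hL' hLL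

/-- decay of inner products of wave packets.  For a Schwartz
function `φ` with `φ̂` supported in `[-1/40, 1/40]`, and two tiles
`σ = I_σ × ω_σ`, `σ' = I_{σ'} × ω_{σ'}` of area 1 (encoded by the centers
`cI, cI'` and lengths `L, L'` of the spatial intervals and the centers
`cω, cω'` of the frequency intervals of lengths `1/L, 1/L'`) with
`ω_σ ⊆ ω_{σ'}`, the wave packets
`φ_σ(x) = L^{-1/2} e^{2πi cω x} φ((x - cI)/L)` satisfy
`|⟨φ_σ, φ_{σ'}⟩| ≤ C √(L'/L) (1 + dist(cI', I_σ)/L)^{-100}`. -/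
theorem wave_packet_inner_product_decay (φ : SchwartzMap ℝ ℂ)
    (hhat : Function.support (FourierTransform.fourier (⇑φ : ℝ → ℂ)) ⊆ Set.Icc (-(1/40) : ℝ) (1/40)) :
    ∃ C : ℝ, 0 < C ∧
      ∀ cI cI' cω cω' L L' : ℝ, 0 < L → 0 < L' →
        Set.Icc (cω - 1/(2*L)) (cω + 1/(2*L)) ⊆ Set.Icc (cω' - 1/(2*L')) (cω' + 1/(2*L')) →
        ‖∫ x : ℝ,
            (((Real.sqrt L)⁻¹ : ℝ) : ℂ) *
              Complex.exp (2 * Real.pi * Complex.I * ((cω * x : ℝ) : ℂ)) * φ ((x - cI)/L) *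
            (starRingEnd ℂ)
              ((((Real.sqrt L')⁻¹ : ℝ) : ℂ) *
                Complex.exp (2 * Real.pi * Complex.I * ((cω' * x : ℝ) : ℂ)) * φ ((x - cI')/L'))‖
          ≤ C * Real.sqrt (L'/L) *
              ((1 + Metric.infDist cI' (Set.Icc (cI - L/2) (cI + L/2)) / L) ^ (100:ℕ))⁻¹ :=
  wave_packet_inner_product_decay_general φ
end
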